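/- Let γ > 0 and let P(0),…,P(K+1) and Q(0),…,Q(K+1) be arbitrary families of real symmetric n×n matrices. For any deterministic x₀ ∈ ℝⁿ and admissible disturbance ν, the cost J^K(x₀,ν) = Σ_{k=0}^{K} E[γ²‖ν(k)‖² − ‖z(k)‖²] satisfies: J^K(x₀,ν) = Σ_{k=0}^{K} E{ [x(k)−E x(k); ν(k)−E ν(k)]ᵀ M̃(P,k) [x(k)−E x(k); ν(k)−E ν(k)] } + Σ_{k=0}^{K} [E x(k); E ν(k)]ᵀ S̃(P,Q,k) [E x(k); E ν(k)] − E[(x(K+1)−E x(K+1))ᵀ P(K+1)(x(K+1)−E x(K+1))] − (E x(K+1))ᵀ Q(K+1)(E x(K+1)) + x₀ᵀ Q(0) x₀, where M̃(P,k) is the 2×2 block matrix with blocks M̃₁₁ = −P(k)+A(k)ᵀP(k+1)A(k)+C(k)ᵀP(k+1)C(k)−Φ(k)ᵀΦ(k), M̃₁₂ = A(k)ᵀP(k+1)B(k)+C(k)ᵀP(k+1)D(k), M̃₂₁ = M̃₁₂ᵀ, M̃₂₂ = γ²I_l+B(k)ᵀP(k+1)B(k)+D(k)ᵀP(k+1)D(k),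 and S̃(P,Q,k) is the 2×2 block matrix with blocks S̃₁₁ = −Q(k)+𝔸(k)ᵀQ(k+1)𝔸(k)+ℂ(k)ᵀP(k+1)ℂ(k)−Φ(k)ᵀΦ(k), S̃₁₂ = 𝔸(k)ᵀQ(k+1)𝔹(k)+ℂ(k)ᵀP(k+1)𝔻(k), S̃₂₁ = S̃₁₂ᵀ, S̃₂₂ = γ²I_l+𝔹(k)ᵀQ(k+1)𝔹(k)+𝔻(k)ᵀP(k+1)𝔻(k). -/

import Mathlib

open MeasureTheory ProbabilityTheory Matrix Finset

/-- The mean-field stochastic state recursion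
`x(k+1) = A x + Ã E x + B ν + B̃ E ν + (C x + C̃ E x + D ν + D̃ E ν)·ω(k)`. -/
noncomputable def mfState {Ω : Type*} [MeasurableSpace Ω] (μ : Measure Ω) {n l : ℕ}
    (A At C Ct : ℕ → Matrix (Fin n) (Fin n) ℝ)
    (B Bt D Dt : ℕ → Matrix (Fin n) (Fin l) ℝ)
    (W : ℕ → Ω → ℝ) (x0 : Fin n → ℝ) (ν : ℕ → Ω → Fin l → ℝ) :
    ℕ → Ω → Fin n → ℝ
  | 0 => fun _ => x0
  | (k+1) => fun a =>
      A k *ᵥ mfState μ A At C Ct B Bt D Dt W x0 ν k a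
      + At k *ᵥ (∫ b, mfState μ A At C Ct B Bt D Dt W x0 ν k b ∂μ)
      + B k *ᵥ ν k a + Bt k *ᵥ (∫ b, ν k b ∂μ)
      + W k a • (C k *ᵥ mfState μ A At C Ct B Bt D Dt W x0 ν k a
          + Ct k *ᵥ (∫ b, mfState μ A At C Ct B Bt D Dt W x0 ν k b ∂μ)
          + D k *ᵥ ν k a + Dt k *ᵥ (∫ b, ν k b ∂μ))

/-- Admissibility of a disturbance: square integrability and independence of the
noise `ω(k)` from the pair `(x(k), ν(k))`. -/
def mfAdmissible {Ω : Type*} [MeasurableSpace Ω] (μ : Measure Ω) {n l : ℕ} (K : ℕ)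
    (W : ℕ → Ω → ℝ) (x : ℕ → Ω → Fin n → ℝ) (ν : ℕ → Ω → Fin l → ℝ) : Prop :=
  (∀ k ≤ K, MemLp (ν k) 2 μ) ∧
  (∀ k ≤ K, IndepFun (fun a => (x k a, ν k a)) (W k) μ)

/-!
Put `V(k) = E[(x(k) - E x(k))ᵀ P(k) (x(k) - E x(k))] + (E x(k))ᵀ Q(k) E x(k)`; the identity is
the telescoping sum of `V(k+1) - V(k)`. Writing `x̃ = x - E x`, `ν̃ = ν - E ν`, the deviation
`x(k+1) - E x(k+1)` is `A x̃ + B ν̃ + ω(k) v` with `v = C x + C̃ E x + D ν + D̃ E ν`. Because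
`ω(k)` is centred, has unit variance and is independent of `(x(k), ν(k))`, its second moment
against `P(k+1)` is `E[(A x̃ + B ν̃)ᵀ P (A x̃ + B ν̃)] + E[vᵀ P v]`. Splitting `E[vᵀ P v]` and the
cost `E[γ²‖ν‖² - ‖Φ x‖²]` into fluctuation and mean parts, the fluctuation terms assemble into the
`M̃`-form of `(x̃, ν̃)` and the mean terms into the `S̃`-form of `(E x, E ν)`.
-/

theorem dotProduct_transpose_mulVec_eq_mulVec_dotProduct {ι κ : Type*} [Fintype ι] [Fintype κ]
    (M : Matrix κ ι ℝ) (y : ι → ℝ) (v : κ → ℝ) : y ⬝ᵥ Mᵀ *ᵥ v = (M *ᵥ y) ⬝ᵥ v := by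
  rw [dotProduct_mulVec, vecMul_transpose]

section Algebra
variable {ι κ τ : Type*} [Fintype ι] [Fintype κ] [Fintype τ] [DecidableEq κ]

/-- `M̃(P,k)` is `riccatiBlock (P k) (P (k+1)) (P (k+1)) A B C D Φ γ` and `S̃(P,Q,k)` is
`riccatiBlock (Q k) (Q (k+1)) (P (k+1)) 𝔸 𝔹 ℂ 𝔻 Φ γ`. -/
def riccatiBlock (P₀ P₁ P₂ A : Matrix ι ι ℝ) (B : Matrix ι κ ℝ) (C : Matrix ι ι ℝ)
    (D : Matrix ι κ ℝ) (Φ : Matrix τ ι ℝ) (γ : ℝ) : Matrix (ι ⊕ κ) (ι ⊕ κ) ℝ :=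
  fromBlocks (-P₀ + Aᵀ * P₁ * A + Cᵀ * P₂ * C - Φᵀ * Φ) (Aᵀ * P₁ * B + Cᵀ * P₂ * D)
    ((Aᵀ * P₁ * B + Cᵀ * P₂ * D)ᵀ) (γ ^ 2 • (1 : Matrix κ κ ℝ) + Bᵀ * P₁ * B + Dᵀ * P₂ * D)

theorem sumElim_dotProduct_riccatiBlock_mulVec {P₀ P₁ P₂ A C : Matrix ι ι ℝ} {B D : Matrix ι κ ℝ}
    (Φ : Matrix τ ι ℝ) (γ : ℝ) (hP₁ : P₁.IsSymm) (hP₂ : P₂.IsSymm) (y : ι → ℝ) (v : κ → ℝ) :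
    Sum.elim y v ⬝ᵥ riccatiBlock P₀ P₁ P₂ A B C D Φ γ *ᵥ Sum.elim y v
      = (A *ᵥ y + B *ᵥ v) ⬝ᵥ P₁ *ᵥ (A *ᵥ y + B *ᵥ v)
        + (C *ᵥ y + D *ᵥ v) ⬝ᵥ P₂ *ᵥ (C *ᵥ y + D *ᵥ v)
        - y ⬝ᵥ P₀ *ᵥ y - (Φ *ᵥ y) ⬝ᵥ (Φ *ᵥ y) + γ ^ 2 * (v ⬝ᵥ v) := by
  have hT : (Aᵀ * P₁ * B + Cᵀ * P₂ * D)ᵀ = Bᵀ * (P₁ * A) + Dᵀ * (P₂ * C) := by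
    simp [transpose_add, transpose_mul, hP₁.eq, hP₂.eq, Matrix.mul_assoc]
  rw [riccatiBlock, hT, fromBlocks_mulVec, sumElim_dotProduct_sumElim]
  simp only [add_mulVec, sub_mulVec, neg_mulVec, mulVec_add, dotProduct_add, add_dotProduct,
    dotProduct_sub, dotProduct_neg, smul_mulVec, one_mulVec, dotProduct_smul, smul_eq_mul,
    Matrix.mul_assoc, ← mulVec_mulVec, dotProduct_transpose_mulVec_eq_mulVec_dotProduct,
    Sum.elim_comp_inl, Sum.elim_comp_inr]
  ring

end Algebra

section VectorL2
variable {Ω ι κ : Type*} [MeasurableSpace Ω] {μ : Measure Ω} [Fintype ι] [Fintype κ]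

theorem MeasureTheory.MemLp.mulVec {p : ENNReal} {f : Ω → ι → ℝ} (hf : MemLp f p μ)
    (M : Matrix κ ι ℝ) : MemLp (fun a => M *ᵥ f a) p μ :=
  (LinearMap.toContinuousLinearMap (mulVecLin M)).comp_memLp' hf

theorem MeasureTheory.Integrable.mulVec {f : Ω → ι → ℝ} (hf : Integrable f μ)
    (M : Matrix κ ι ℝ) : Integrable (fun a => M *ᵥ f a) μ :=
  (LinearMap.toContinuousLinearMap (mulVecLin M)).integrable_comp hf

theorem MeasureTheory.MemLp.integrable_dotProduct {f g : Ω → ι → ℝ} (hf : MemLp f 2 μ)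
    (hg : MemLp g 2 μ) : Integrable (fun a => f a ⬝ᵥ g a) μ :=
  integrable_finsetSum _ fun i _ => (hf.eval i).integrable_mul (hg.eval i)

theorem MeasureTheory.MemLp.integrable_dotProduct_mulVec {f : Ω → ι → ℝ} {g : Ω → κ → ℝ}
    (hf : MemLp f 2 μ) (hg : MemLp g 2 μ) (M : Matrix ι κ ℝ) :
    Integrable (fun a => f a ⬝ᵥ M *ᵥ g a) μ :=
  hf.integrable_dotProduct (hg.mulVec M)

theorem integral_mulVec {f : Ω → ι → ℝ} (hf : Integrable f μ) (M : Matrix κ ι ℝ) :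
    ∫ a, M *ᵥ f a ∂μ = M *ᵥ ∫ a, f a ∂μ :=
  (LinearMap.toContinuousLinearMap (mulVecLin M)).integral_comp_comm hf

theorem integral_dotProduct_const {f : Ω → ι → ℝ} (hf : Integrable f μ) (c : ι → ℝ) :
    ∫ a, f a ⬝ᵥ c ∂μ = (∫ a, f a ∂μ) ⬝ᵥ c := by
  simp only [dotProduct, eval_integral hf.eval]
  rw [integral_finsetSum _ fun i _ => (hf.eval i).mul_const (c i)]
  simp only [integral_mul_const]

theorem integral_add_dotProduct_mulVec_add {u v : Ω → ι → ℝ} (hu : MemLp u 2 μ)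
    (hv : MemLp v 2 μ) (M : Matrix ι ι ℝ) :
    ∫ a, (u a + v a) ⬝ᵥ M *ᵥ (u a + v a) ∂μ
      = ∫ a, u a ⬝ᵥ M *ᵥ u a ∂μ + ∫ a, u a ⬝ᵥ M *ᵥ v a ∂μ
        + ∫ a, v a ⬝ᵥ M *ᵥ u a ∂μ + ∫ a, v a ⬝ᵥ M *ᵥ v a ∂μ := by
  have hexpand : ∀ a, (u a + v a) ⬝ᵥ M *ᵥ (u a + v a)
      = (u a ⬝ᵥ M *ᵥ u a + u a ⬝ᵥ M *ᵥ v a) + (v a ⬝ᵥ M *ᵥ u a + v a ⬝ᵥ M *ᵥ v a) := by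
    intro a
    simp only [mulVec_add, dotProduct_add, add_dotProduct]
    ring
  have huu := hu.integrable_dotProduct_mulVec hu M
  have huv := hu.integrable_dotProduct_mulVec hv M
  have hvu := hv.integrable_dotProduct_mulVec hu M
  have hvv := hv.integrable_dotProduct_mulVec hv M
  simp only [hexpand]
  rw [integral_add (huu.fun_add huv) (hvu.fun_add hvv), integral_add huu huv,
    integral_add hvu hvv, ← add_assoc]

theorem integral_dotProduct_mulVec_eq_centered_add [IsProbabilityMeasure μ] {f : Ω → ι → ℝ}
    (hf : MemLp f 2 μ) (M : Matrix ι ι ℝ) :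
    ∫ a, f a ⬝ᵥ M *ᵥ f a ∂μ
      = ∫ a, (f a - ∫ b, f b ∂μ) ⬝ᵥ M *ᵥ (f a - ∫ b, f b ∂μ) ∂μ
        + (∫ b, f b ∂μ) ⬝ᵥ M *ᵥ ∫ b, f b ∂μ := by
  set c := ∫ b, f b ∂μ
  have hf₀ : MemLp (fun a => f a - c) 2 μ := hf.sub (memLp_const c)
  have hc : ∫ a, (f a - c) ∂μ = 0 := by
    rw [integral_sub (hf.integrable one_le_two) (integrable_const c)]
    simp [c]
  have hcross : ∫ a, c ⬝ᵥ M *ᵥ (f a - c) ∂μ = 0 := by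
    simp only [dotProduct_comm c]
    rw [integral_dotProduct_const ((hf₀.mulVec M).integrable one_le_two),
      integral_mulVec (hf₀.integrable one_le_two), hc, mulVec_zero, zero_dotProduct]
  have h := integral_add_dotProduct_mulVec_add hf₀ (memLp_const c) M
  simp only [sub_add_cancel] at h
  rw [h, integral_dotProduct_const (hf₀.integrable one_le_two), hc, hcross]
  simp

theorem integral_dotProduct_self_eq_centered_add [IsProbabilityMeasure μ] {f : Ω → ι → ℝ}
    (hf : MemLp f 2 μ) :
    ∫ a, f a ⬝ᵥ f a ∂μ
      = ∫ a, (f a - ∫ b, f b ∂μ) ⬝ᵥ (f a - ∫ b, f b ∂μ) ∂μ + (∫ b, f b ∂μ) ⬝ᵥ ∫ b, f b ∂μ := by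
  classical
  simpa only [one_mulVec] using integral_dotProduct_mulVec_eq_centered_add hf 1

theorem integral_sumElim_dotProduct_riccatiBlock_mulVec {τ : Type*} [Fintype τ] [DecidableEq κ]
    {P₀ P₁ P₂ A C : Matrix ι ι ℝ} {B D : Matrix ι κ ℝ} (Φ : Matrix τ ι ℝ) (γ : ℝ)
    (hP₁ : P₁.IsSymm) (hP₂ : P₂.IsSymm) {f : Ω → ι → ℝ} {g : Ω → κ → ℝ} (hf : MemLp f 2 μ)
    (hg : MemLp g 2 μ) :
    ∫ a, Sum.elim (f a) (g a) ⬝ᵥ riccatiBlock P₀ P₁ P₂ A B C D Φ γ *ᵥ Sum.elim (f a) (g a) ∂μ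
      = ∫ a, (A *ᵥ f a + B *ᵥ g a) ⬝ᵥ P₁ *ᵥ (A *ᵥ f a + B *ᵥ g a) ∂μ
        + ∫ a, (C *ᵥ f a + D *ᵥ g a) ⬝ᵥ P₂ *ᵥ (C *ᵥ f a + D *ᵥ g a) ∂μ
        - ∫ a, f a ⬝ᵥ P₀ *ᵥ f a ∂μ - ∫ a, (Φ *ᵥ f a) ⬝ᵥ (Φ *ᵥ f a) ∂μ
        + γ ^ 2 * ∫ a, g a ⬝ᵥ g a ∂μ := by
  have hAB : MemLp (fun a => A *ᵥ f a + B *ᵥ g a) 2 μ := (hf.mulVec A).add (hg.mulVec B)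
  have hCD : MemLp (fun a => C *ᵥ f a + D *ᵥ g a) 2 μ := (hf.mulVec C).add (hg.mulVec D)
  have i₁ := hAB.integrable_dotProduct_mulVec hAB P₁
  have i₂ := hCD.integrable_dotProduct_mulVec hCD P₂
  have i₃ := hf.integrable_dotProduct_mulVec hf P₀
  have i₄ := (hf.mulVec Φ).integrable_dotProduct (hf.mulVec Φ)
  have i₅ := hg.integrable_dotProduct hg
  simp only [sumElim_dotProduct_riccatiBlock_mulVec Φ γ hP₁ hP₂]
  rw [integral_add (((i₁.fun_add i₂).sub' i₃).sub' i₄) (i₅.const_mul _),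
    integral_sub ((i₁.fun_add i₂).sub' i₃) i₄, integral_sub (i₁.fun_add i₂) i₃,
    integral_add i₁ i₂, integral_const_mul]

end VectorL2

section Noise
variable {Ω ι : Type*} [MeasurableSpace Ω] {μ : Measure Ω} [Fintype ι]

theorem ProbabilityTheory.IndepFun.memLp_two_smul {E : Type*} [NormedAddCommGroup E]
    [NormedSpace ℝ E] [MeasurableSpace E] [BorelSpace E] {v : Ω → E} {ω : Ω → ℝ}
    (hind : IndepFun v ω μ) (hv : MemLp v 2 μ) (hω : MemLp ω 2 μ) :
    MemLp (fun a => ω a • v a) 2 μ := by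
  refine (memLp_two_iff_integrable_sq_norm (hω.1.smul hv.1)).2 ?_
  have h := (hind.symm.comp (measurable_norm.pow_const 2)
    (measurable_norm.pow_const 2)).integrable_mul
    ((memLp_two_iff_integrable_sq_norm hω.1).1 hω) ((memLp_two_iff_integrable_sq_norm hv.1).1 hv)
  refine h.congr (ae_of_all _ fun a => ?_)
  simp [norm_smul, mul_pow]

theorem integral_add_smul_dotProduct_mulVec_of_indepFun {u v : Ω → ι → ℝ} {ω : Ω → ℝ}
    (hu : MemLp u 2 μ) (hv : MemLp v 2 μ) (hω : MemLp ω 2 μ)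
    (hind : IndepFun (fun a => (u a, v a)) ω μ) (hω₀ : ∫ a, ω a ∂μ = 0)
    (hω₁ : ∫ a, ω a * ω a ∂μ = 1) (M : Matrix ι ι ℝ) :
    ∫ a, (u a + ω a • v a) ⬝ᵥ M *ᵥ (u a + ω a • v a) ∂μ
      = ∫ a, u a ⬝ᵥ M *ᵥ u a ∂μ + ∫ a, v a ⬝ᵥ M *ᵥ v a ∂μ := by
  have hωv : MemLp (fun a => ω a • v a) 2 μ :=
    (hind.comp measurable_snd measurable_id).memLp_two_smul hv hω
  have indep {F : (ι → ℝ) × (ι → ℝ) → ℝ} {G : ℝ → ℝ} (hF : Measurable F) (hG : Measurable G) :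
      IndepFun (fun a => G (ω a)) (fun a => F (u a, v a)) μ :=
    (hind.comp hF hG).symm
  have iuv : IndepFun ω (fun a => u a ⬝ᵥ M *ᵥ v a) μ :=
    indep (F := fun p => p.1 ⬝ᵥ M *ᵥ p.2) (by fun_prop) measurable_id
  have ivu : IndepFun ω (fun a => v a ⬝ᵥ M *ᵥ u a) μ :=
    indep (F := fun p => p.2 ⬝ᵥ M *ᵥ p.1) (by fun_prop) measurable_id
  have ivv : IndepFun (fun a => ω a * ω a) (fun a => v a ⬝ᵥ M *ᵥ v a) μ :=
    indep (F := fun p => p.2 ⬝ᵥ M *ᵥ p.2) (G := fun t => t * t) (by fun_prop) (by fun_prop)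
  have huv : ∫ a, u a ⬝ᵥ M *ᵥ (ω a • v a) ∂μ = 0 := by
    simp only [mulVec_smul, dotProduct_smul, smul_eq_mul]
    rw [iuv.integral_fun_mul_eq_mul_integral hω.1 (hu.integrable_dotProduct_mulVec hv M).1, hω₀,
      zero_mul]
  have hvu : ∫ a, (ω a • v a) ⬝ᵥ M *ᵥ u a ∂μ = 0 := by
    simp only [smul_dotProduct, smul_eq_mul]
    rw [ivu.integral_fun_mul_eq_mul_integral hω.1 (hv.integrable_dotProduct_mulVec hu M).1, hω₀,
      zero_mul]
  have hvv : ∫ a, (ω a • v a) ⬝ᵥ M *ᵥ (ω a • v a) ∂μ = ∫ a, v a ⬝ᵥ M *ᵥ v a ∂μ := by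
    simp only [mulVec_smul, dotProduct_smul, smul_dotProduct, smul_eq_mul, ← mul_assoc]
    rw [ivv.integral_fun_mul_eq_mul_integral (hω.1.mul hω.1)
      (hv.integrable_dotProduct_mulVec hv M).1, hω₁, one_mul]
  rw [integral_add_dotProduct_mulVec_add hu hωv M, huv, hvu, hvv, add_zero, add_zero]

end Noise

section MeanField
variable {Ω ι κ τ : Type*} [MeasurableSpace Ω] {μ : Measure Ω} [Fintype ι] [Fintype κ]
  [Fintype τ]

noncomputable def meanFieldAffine (μ : Measure Ω) (A At : Matrix ι ι ℝ) (B Bt : Matrix ι κ ℝ)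
    (y : Ω → ι → ℝ) (w : Ω → κ → ℝ) : Ω → ι → ℝ :=
  fun a => A *ᵥ y a + At *ᵥ (∫ b, y b ∂μ) + B *ᵥ w a + Bt *ᵥ (∫ b, w b ∂μ)

noncomputable def meanFieldStep (μ : Measure Ω) (A At C Ct : Matrix ι ι ℝ)
    (B Bt D Dt : Matrix ι κ ℝ) (ω : Ω → ℝ) (y : Ω → ι → ℝ) (w : Ω → κ → ℝ) : Ω → ι → ℝ :=
  fun a => meanFieldAffine μ A At B Bt y w a + ω a • meanFieldAffine μ C Ct D Dt y w a

noncomputable def meanFieldQuad (μ : Measure Ω) (P Q : Matrix ι ι ℝ) (f : Ω → ι → ℝ) : ℝ :=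
  ∫ a, (f a - ∫ b, f b ∂μ) ⬝ᵥ P *ᵥ (f a - ∫ b, f b ∂μ) ∂μ + (∫ b, f b ∂μ) ⬝ᵥ Q *ᵥ ∫ b, f b ∂μ

theorem meanFieldQuad_const [IsProbabilityMeasure μ] (P Q : Matrix ι ι ℝ) (c : ι → ℝ) :
    meanFieldQuad μ P Q (fun _ => c) = c ⬝ᵥ Q *ᵥ c := by
  simp [meanFieldQuad]

theorem meanFieldAffine_sub_integral (A At : Matrix ι ι ℝ) (B Bt : Matrix ι κ ℝ)
    (y : Ω → ι → ℝ) (w : Ω → κ → ℝ) (a : Ω) :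
    meanFieldAffine μ A At B Bt y w a - ((A + At) *ᵥ ∫ b, y b ∂μ + (B + Bt) *ᵥ ∫ b, w b ∂μ)
      = A *ᵥ (y a - ∫ b, y b ∂μ) + B *ᵥ (w a - ∫ b, w b ∂μ) := by
  simp only [meanFieldAffine, add_mulVec, mulVec_sub]
  abel

theorem memLp_meanFieldAffine [IsFiniteMeasure μ] {p : ENNReal} {y : Ω → ι → ℝ}
    {w : Ω → κ → ℝ} (A At : Matrix ι ι ℝ) (B Bt : Matrix ι κ ℝ) (hy : MemLp y p μ)
    (hw : MemLp w p μ) : MemLp (meanFieldAffine μ A At B Bt y w) p μ :=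
  (((hy.mulVec A).add (memLp_const _)).add (hw.mulVec B)).add (memLp_const _)

theorem integral_meanFieldAffine [IsProbabilityMeasure μ] {y : Ω → ι → ℝ} {w : Ω → κ → ℝ}
    (A At : Matrix ι ι ℝ) (B Bt : Matrix ι κ ℝ) (hy : Integrable y μ) (hw : Integrable w μ) :
    ∫ a, meanFieldAffine μ A At B Bt y w a ∂μ
      = (A + At) *ᵥ ∫ b, y b ∂μ + (B + Bt) *ᵥ ∫ b, w b ∂μ := by
  have hAy := hy.mulVec A
  have hAy' := hAy.fun_add (integrable_const (At *ᵥ ∫ b, y b ∂μ))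
  have hAyBw := hAy'.fun_add (hw.mulVec B)
  simp only [meanFieldAffine]
  rw [integral_add hAyBw (integrable_const _), integral_add hAy' (hw.mulVec B),
    integral_add hAy (integrable_const _), integral_mulVec hy, integral_mulVec hw]
  simp only [integral_const, probReal_univ, one_smul, add_mulVec]
  abel

theorem ProbabilityTheory.IndepFun.meanFieldAffine {y : Ω → ι → ℝ} {w : Ω → κ → ℝ}
    {ω : Ω → ℝ} (hind : IndepFun (fun a => (y a, w a)) ω μ) (C Ct : Matrix ι ι ℝ)
    (D Dt : Matrix ι κ ℝ) : IndepFun (meanFieldAffine μ C Ct D Dt y w) ω μ := by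
  have h := hind.comp
    (φ := fun p => C *ᵥ p.1 + Ct *ᵥ (∫ b, y b ∂μ) + D *ᵥ p.2 + Dt *ᵥ (∫ b, w b ∂μ))
    (ψ := id) (by fun_prop) measurable_id
  exact h

variable [IsProbabilityMeasure μ] {A At C Ct : Matrix ι ι ℝ} {B Bt D Dt : Matrix ι κ ℝ}
  {ω : Ω → ℝ} {y : Ω → ι → ℝ} {w : Ω → κ → ℝ}

theorem memLp_meanFieldStep (hω : MemLp ω 2 μ) (hy : MemLp y 2 μ) (hw : MemLp w 2 μ)
    (hind : IndepFun (fun a => (y a, w a)) ω μ) :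
    MemLp (meanFieldStep μ A At C Ct B Bt D Dt ω y w) 2 μ := by
  exact (memLp_meanFieldAffine A At B Bt hy hw).add
    ((hind.meanFieldAffine C Ct D Dt).memLp_two_smul (memLp_meanFieldAffine C Ct D Dt hy hw) hω)

theorem integral_meanFieldStep (hω : MemLp ω 2 μ) (hω₀ : ∫ a, ω a ∂μ = 0) (hy : MemLp y 2 μ)
    (hw : MemLp w 2 μ) (hind : IndepFun (fun a => (y a, w a)) ω μ) :
    ∫ a, meanFieldStep μ A At C Ct B Bt D Dt ω y w a ∂μ
      = (A + At) *ᵥ ∫ b, y b ∂μ + (B + Bt) *ᵥ ∫ b, w b ∂μ := by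
  have hv := memLp_meanFieldAffine C Ct D Dt hy hw
  have hωv := (hind.meanFieldAffine C Ct D Dt).memLp_two_smul hv hω
  simp only [meanFieldStep]
  rw [integral_add ((memLp_meanFieldAffine A At B Bt hy hw).integrable one_le_two)
      (hωv.integrable one_le_two),
    integral_meanFieldAffine A At B Bt (hy.integrable one_le_two) (hw.integrable one_le_two),
    (hind.meanFieldAffine C Ct D Dt).symm.integral_fun_smul_eq_smul_integral hω.1 hv.1, hω₀,
    zero_smul, add_zero]

theorem meanFieldQuad_meanFieldStep (hω : MemLp ω 2 μ) (hω₀ : ∫ a, ω a ∂μ = 0)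
    (hω₁ : ∫ a, ω a * ω a ∂μ = 1) (hy : MemLp y 2 μ) (hw : MemLp w 2 μ)
    (hind : IndepFun (fun a => (y a, w a)) ω μ) (P Q : Matrix ι ι ℝ) :
    meanFieldQuad μ P Q (meanFieldStep μ A At C Ct B Bt D Dt ω y w)
      = ∫ a, (A *ᵥ (y a - ∫ b, y b ∂μ) + B *ᵥ (w a - ∫ b, w b ∂μ)) ⬝ᵥ
            P *ᵥ (A *ᵥ (y a - ∫ b, y b ∂μ) + B *ᵥ (w a - ∫ b, w b ∂μ)) ∂μ
        + ∫ a, (C *ᵥ (y a - ∫ b, y b ∂μ) + D *ᵥ (w a - ∫ b, w b ∂μ)) ⬝ᵥ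
            P *ᵥ (C *ᵥ (y a - ∫ b, y b ∂μ) + D *ᵥ (w a - ∫ b, w b ∂μ)) ∂μ
        + ((C + Ct) *ᵥ ∫ b, y b ∂μ + (D + Dt) *ᵥ ∫ b, w b ∂μ) ⬝ᵥ
            P *ᵥ ((C + Ct) *ᵥ ∫ b, y b ∂μ + (D + Dt) *ᵥ ∫ b, w b ∂μ)
        + ((A + At) *ᵥ ∫ b, y b ∂μ + (B + Bt) *ᵥ ∫ b, w b ∂μ) ⬝ᵥ
            Q *ᵥ ((A + At) *ᵥ ∫ b, y b ∂μ + (B + Bt) *ᵥ ∫ b, w b ∂μ) := by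
  have hy₀ : MemLp (fun a => y a - ∫ b, y b ∂μ) 2 μ := hy.sub (memLp_const _)
  have hw₀ : MemLp (fun a => w a - ∫ b, w b ∂μ) 2 μ := hw.sub (memLp_const _)
  have hu : MemLp (fun a => A *ᵥ (y a - ∫ b, y b ∂μ) + B *ᵥ (w a - ∫ b, w b ∂μ)) 2 μ :=
    (hy₀.mulVec A).add (hw₀.mulVec B)
  have hv := memLp_meanFieldAffine C Ct D Dt hy hw
  have hind' : IndepFun (fun a => (A *ᵥ (y a - ∫ b, y b ∂μ) + B *ᵥ (w a - ∫ b, w b ∂μ),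
      meanFieldAffine μ C Ct D Dt y w a)) ω μ := by
    have h := hind.comp (φ := fun p => (A *ᵥ (p.1 - ∫ b, y b ∂μ) + B *ᵥ (p.2 - ∫ b, w b ∂μ),
      C *ᵥ p.1 + Ct *ᵥ (∫ b, y b ∂μ) + D *ᵥ p.2 + Dt *ᵥ (∫ b, w b ∂μ))) (ψ := id) (by fun_prop)
      measurable_id
    exact h
  have hdev : ∀ a, meanFieldStep μ A At C Ct B Bt D Dt ω y w a
      - ∫ b, meanFieldStep μ A At C Ct B Bt D Dt ω y w b ∂μ
      = A *ᵥ (y a - ∫ b, y b ∂μ) + B *ᵥ (w a - ∫ b, w b ∂μ)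
        + ω a • meanFieldAffine μ C Ct D Dt y w a := by
    intro a
    rw [integral_meanFieldStep hω hω₀ hy hw hind, ← meanFieldAffine_sub_integral, meanFieldStep]
    abel
  rw [meanFieldQuad]
  simp only [hdev]
  rw [integral_add_smul_dotProduct_mulVec_of_indepFun hu hv hω hind' hω₀ hω₁,
    integral_dotProduct_mulVec_eq_centered_add hv, integral_meanFieldStep hω hω₀ hy hw hind,
    integral_meanFieldAffine C Ct D Dt (hy.integrable one_le_two) (hw.integrable one_le_two)]
  simp only [meanFieldAffine_sub_integral]
  ring

theorem riccatiBlock_forms_eq_cost_add_meanFieldQuad_sub [DecidableEq κ]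
    {P₀ P₁ Q₀ Q₁ : Matrix ι ι ℝ} (Φ : Matrix τ ι ℝ) (γ : ℝ) (hP₁ : P₁.IsSymm) (hQ₁ : Q₁.IsSymm)
    (hω : MemLp ω 2 μ) (hω₀ : ∫ a, ω a ∂μ = 0) (hω₁ : ∫ a, ω a * ω a ∂μ = 1)
    (hy : MemLp y 2 μ) (hw : MemLp w 2 μ) (hind : IndepFun (fun a => (y a, w a)) ω μ) :
    (∫ a, Sum.elim (y a - ∫ b, y b ∂μ) (w a - ∫ b, w b ∂μ) ⬝ᵥ
        riccatiBlock P₀ P₁ P₁ A B C D Φ γ *ᵥ Sum.elim (y a - ∫ b, y b ∂μ) (w a - ∫ b, w b ∂μ) ∂μ)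
      + Sum.elim (∫ b, y b ∂μ) (∫ b, w b ∂μ) ⬝ᵥ
        riccatiBlock Q₀ Q₁ P₁ (A + At) (B + Bt) (C + Ct) (D + Dt) Φ γ *ᵥ
          Sum.elim (∫ b, y b ∂μ) (∫ b, w b ∂μ)
    = ∫ a, (γ ^ 2 * (w a ⬝ᵥ w a) - (Φ *ᵥ y a) ⬝ᵥ (Φ *ᵥ y a)) ∂μ
      + (meanFieldQuad μ P₁ Q₁ (meanFieldStep μ A At C Ct B Bt D Dt ω y w)
        - meanFieldQuad μ P₀ Q₀ y) := by
  have hy₀ : MemLp (fun a => y a - ∫ b, y b ∂μ) 2 μ := hy.sub (memLp_const _)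
  have hw₀ : MemLp (fun a => w a - ∫ b, w b ∂μ) 2 μ := hw.sub (memLp_const _)
  have hΦy := hy.mulVec Φ
  rw [integral_sumElim_dotProduct_riccatiBlock_mulVec Φ γ hP₁ hP₁ hy₀ hw₀,
    sumElim_dotProduct_riccatiBlock_mulVec Φ γ hQ₁ hP₁,
    meanFieldQuad_meanFieldStep hω hω₀ hω₁ hy hw hind, meanFieldQuad,
    integral_sub ((hw.integrable_dotProduct hw).const_mul _) (hΦy.integrable_dotProduct hΦy),
    integral_const_mul, integral_dotProduct_self_eq_centered_add hw,
    integral_dotProduct_self_eq_centered_add hΦy, integral_mulVec (hy.integrable one_le_two)]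
  simp only [← mulVec_sub]
  ring

theorem sum_riccatiBlock_forms_eq_sum_cost_add [DecidableEq κ] (K : ℕ)
    {A At C Ct : ℕ → Matrix ι ι ℝ} {B Bt D Dt : ℕ → Matrix ι κ ℝ} (Φ : ℕ → Matrix τ ι ℝ) (γ : ℝ)
    {P Q : ℕ → Matrix ι ι ℝ} {W : ℕ → Ω → ℝ} {x : ℕ → Ω → ι → ℝ} {ν : ℕ → Ω → κ → ℝ}
    (hx : ∀ k, x (k + 1) = meanFieldStep μ (A k) (At k) (C k) (Ct k) (B k) (Bt k) (D k) (Dt k)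
      (W k) (x k) (ν k))
    (hx₀ : MemLp (x 0) 2 μ) (hP : ∀ k ≤ K, (P (k + 1)).IsSymm) (hQ : ∀ k ≤ K, (Q (k + 1)).IsSymm)
    (hW : ∀ k ≤ K, MemLp (W k) 2 μ) (hW₀ : ∀ k ≤ K, ∫ a, W k a ∂μ = 0)
    (hW₁ : ∀ k ≤ K, ∫ a, W k a * W k a ∂μ = 1) (hν : ∀ k ≤ K, MemLp (ν k) 2 μ)
    (hind : ∀ k ≤ K, IndepFun (fun a => (x k a, ν k a)) (W k) μ) :
    ∑ k ∈ range (K + 1), ∫ a, Sum.elim (x k a - ∫ b, x k b ∂μ) (ν k a - ∫ b, ν k b ∂μ) ⬝ᵥ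
        riccatiBlock (P k) (P (k + 1)) (P (k + 1)) (A k) (B k) (C k) (D k) (Φ k) γ *ᵥ
          Sum.elim (x k a - ∫ b, x k b ∂μ) (ν k a - ∫ b, ν k b ∂μ) ∂μ
      + ∑ k ∈ range (K + 1), Sum.elim (∫ b, x k b ∂μ) (∫ b, ν k b ∂μ) ⬝ᵥ
        riccatiBlock (Q k) (Q (k + 1)) (P (k + 1)) (A k + At k) (B k + Bt k) (C k + Ct k)
          (D k + Dt k) (Φ k) γ *ᵥ Sum.elim (∫ b, x k b ∂μ) (∫ b, ν k b ∂μ)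
    = ∑ k ∈ range (K + 1), ∫ a, (γ ^ 2 * (ν k a ⬝ᵥ ν k a) - (Φ k *ᵥ x k a) ⬝ᵥ (Φ k *ᵥ x k a)) ∂μ
      + (meanFieldQuad μ (P (K + 1)) (Q (K + 1)) (x (K + 1))
        - meanFieldQuad μ (P 0) (Q 0) (x 0)) := by
  have hL2 : ∀ k ≤ K + 1, MemLp (x k) 2 μ := by
    intro k
    induction k with
    | zero => exact fun _ => hx₀
    | succ k ih =>
      intro hk
      rw [hx k]
      exact memLp_meanFieldStep (hW k (by omega)) (ih (by omega)) (hν k (by omega))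
        (hind k (by omega))
  rw [← sum_add_distrib, ← sum_range_sub (fun k => meanFieldQuad μ (P k) (Q k) (x k)),
    ← sum_add_distrib]
  refine sum_congr rfl fun k hk => ?_
  have hk : k ≤ K := Nat.lt_succ_iff.mp (mem_range.mp hk)
  rw [hx k]
  exact riccatiBlock_forms_eq_cost_add_meanFieldQuad_sub (Φ k) γ (hP k hk) (hQ k hk) (hW k hk)
    (hW₀ k hk) (hW₁ k hk) (hL2 k (by omega)) (hν k hk) (hind k hk)

end MeanField

theorem mf_lemma23_general {Ω : Type*} [MeasurableSpace Ω] (μ : Measure Ω) [IsProbabilityMeasure μ]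
    (K n l m : ℕ) (γ : ℝ)
    (A At C Ct : ℕ → Matrix (Fin n) (Fin n) ℝ)
    (B Bt D Dt : ℕ → Matrix (Fin n) (Fin l) ℝ)
    (Φ : ℕ → Matrix (Fin m) (Fin n) ℝ)
    (W : ℕ → Ω → ℝ)
    (hW2 : ∀ k ≤ K, MemLp (W k) 2 μ)
    (hWmean : ∀ k ≤ K, ∫ a, W k a ∂μ = 0)
    (hWcov : ∀ s ≤ K, ∀ t ≤ K, ∫ a, W s a * W t a ∂μ = if s = t then (1:ℝ) else 0)
    (P Q : ℕ → Matrix (Fin n) (Fin n) ℝ)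
    (hP : ∀ k ≤ K + 1, (P k).IsSymm) (hQ : ∀ k ≤ K + 1, (Q k).IsSymm)
    (x0 : Fin n → ℝ) (ν : ℕ → Ω → Fin l → ℝ)
    (x : ℕ → Ω → Fin n → ℝ)
    (hx : x = mfState μ A At C Ct B Bt D Dt W x0 ν)
    (hadm : mfAdmissible μ K W x ν) :
    (∑ k ∈ Finset.range (K + 1), ∫ a,
        (γ^2 * ((ν k a) ⬝ᵥ (ν k a)) - (Φ k *ᵥ x k a) ⬝ᵥ (Φ k *ᵥ x k a)) ∂μ)
    = (∑ k ∈ Finset.range (K + 1), ∫ a,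
        (Sum.elim (x k a - ∫ b, x k b ∂μ) (ν k a - ∫ b, ν k b ∂μ)) ⬝ᵥ
          (Matrix.fromBlocks
            (-(P k) + (A k)ᵀ * P (k+1) * A k + (C k)ᵀ * P (k+1) * C k - (Φ k)ᵀ * Φ k)
            ((A k)ᵀ * P (k+1) * B k + (C k)ᵀ * P (k+1) * D k)
            (((A k)ᵀ * P (k+1) * B k + (C k)ᵀ * P (k+1) * D k)ᵀ)
            (γ^2 • (1 : Matrix (Fin l) (Fin l) ℝ)
              + (B k)ᵀ * P (k+1) * B k + (D k)ᵀ * P (k+1) * D k)) *ᵥ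
          (Sum.elim (x k a - ∫ b, x k b ∂μ) (ν k a - ∫ b, ν k b ∂μ)) ∂μ)
      + (∑ k ∈ Finset.range (K + 1),
          (Sum.elim (∫ b, x k b ∂μ) (∫ b, ν k b ∂μ)) ⬝ᵥ
            (Matrix.fromBlocks
              (-(Q k) + (A k + At k)ᵀ * Q (k+1) * (A k + At k)
                + (C k + Ct k)ᵀ * P (k+1) * (C k + Ct k) - (Φ k)ᵀ * Φ k)
              ((A k + At k)ᵀ * Q (k+1) * (B k + Bt k)
                + (C k + Ct k)ᵀ * P (k+1) * (D k + Dt k))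
              (((A k + At k)ᵀ * Q (k+1) * (B k + Bt k)
                + (C k + Ct k)ᵀ * P (k+1) * (D k + Dt k))ᵀ)
              (γ^2 • (1 : Matrix (Fin l) (Fin l) ℝ)
                + (B k + Bt k)ᵀ * Q (k+1) * (B k + Bt k)
                + (D k + Dt k)ᵀ * P (k+1) * (D k + Dt k))) *ᵥ
            (Sum.elim (∫ b, x k b ∂μ) (∫ b, ν k b ∂μ)))
      - (∫ a, (x (K+1) a - ∫ b, x (K+1) b ∂μ) ⬝ᵥ (P (K+1)) *ᵥ
            (x (K+1) a - ∫ b, x (K+1) b ∂μ) ∂μ)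
      - (∫ b, x (K+1) b ∂μ) ⬝ᵥ (Q (K+1)) *ᵥ (∫ b, x (K+1) b ∂μ)
      + x0 ⬝ᵥ (Q 0) *ᵥ x0 := by
  obtain ⟨hν, hind⟩ := hadm
  have hx₀ : x 0 = fun _ => x0 := by rw [hx]; rfl
  have key := sum_riccatiBlock_forms_eq_sum_cost_add K Φ γ (fun k => by rw [hx]; rfl)
    (hx₀ ▸ memLp_const x0) (fun k _ => hP (k + 1) (by omega)) (fun k _ => hQ (k + 1) (by omega))
    hW2 hWmean (fun k hk => by simpa using hWcov k hk k hk) hν hind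
  rw [hx₀, meanFieldQuad_const] at key
  simp only [riccatiBlock, meanFieldQuad] at key
  linarith

/-- Lemma 2.3 of the paper.  Representation of the cost
`J^K(x₀,ν) = Σ E[γ²‖ν‖² − ‖z‖²]`, `z(k) = Φ(k)x(k)`, through the block matrices
`M̃(P,k)` and `S̃(P,Q,k)`. -/
theorem mf_lemma23 {Ω : Type*} [MeasurableSpace Ω] (μ : Measure Ω) [IsProbabilityMeasure μ]
    (K n l m : ℕ) (γ : ℝ) (hγ : 0 < γ)
    (A At C Ct : ℕ → Matrix (Fin n) (Fin n) ℝ)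
    (B Bt D Dt : ℕ → Matrix (Fin n) (Fin l) ℝ)
    (Φ : ℕ → Matrix (Fin m) (Fin n) ℝ)
    (W : ℕ → Ω → ℝ)
    (hW2 : ∀ k ≤ K, MemLp (W k) 2 μ)
    (hWmean : ∀ k ≤ K, ∫ a, W k a ∂μ = 0)
    (hWcov : ∀ s ≤ K, ∀ t ≤ K, ∫ a, W s a * W t a ∂μ = if s = t then (1:ℝ) else 0)
    (P Q : ℕ → Matrix (Fin n) (Fin n) ℝ)
    (hP : ∀ k ≤ K + 1, (P k).IsSymm) (hQ : ∀ k ≤ K + 1, (Q k).IsSymm)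
    (x0 : Fin n → ℝ) (ν : ℕ → Ω → Fin l → ℝ)
    (x : ℕ → Ω → Fin n → ℝ)
    (hx : x = mfState μ A At C Ct B Bt D Dt W x0 ν)
    (hadm : mfAdmissible μ K W x ν) :
    (∑ k ∈ Finset.range (K + 1), ∫ a,
        (γ^2 * ((ν k a) ⬝ᵥ (ν k a)) - (Φ k *ᵥ x k a) ⬝ᵥ (Φ k *ᵥ x k a)) ∂μ)
    = (∑ k ∈ Finset.range (K + 1), ∫ a,
        (Sum.elim (x k a - ∫ b, x k b ∂μ) (ν k a - ∫ b, ν k b ∂μ)) ⬝ᵥ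
          (Matrix.fromBlocks
            (-(P k) + (A k)ᵀ * P (k+1) * A k + (C k)ᵀ * P (k+1) * C k - (Φ k)ᵀ * Φ k)
            ((A k)ᵀ * P (k+1) * B k + (C k)ᵀ * P (k+1) * D k)
            (((A k)ᵀ * P (k+1) * B k + (C k)ᵀ * P (k+1) * D k)ᵀ)
            (γ^2 • (1 : Matrix (Fin l) (Fin l) ℝ)
              + (B k)ᵀ * P (k+1) * B k + (D k)ᵀ * P (k+1) * D k)) *ᵥ
          (Sum.elim (x k a - ∫ b, x k b ∂μ) (ν k a - ∫ b, ν k b ∂μ)) ∂μ)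
      + (∑ k ∈ Finset.range (K + 1),
          (Sum.elim (∫ b, x k b ∂μ) (∫ b, ν k b ∂μ)) ⬝ᵥ
            (Matrix.fromBlocks
              (-(Q k) + (A k + At k)ᵀ * Q (k+1) * (A k + At k)
                + (C k + Ct k)ᵀ * P (k+1) * (C k + Ct k) - (Φ k)ᵀ * Φ k)
              ((A k + At k)ᵀ * Q (k+1) * (B k + Bt k)
                + (C k + Ct k)ᵀ * P (k+1) * (D k + Dt k))
              (((A k + At k)ᵀ * Q (k+1) * (B k + Bt k)
                + (C k + Ct k)ᵀ * P (k+1) * (D k + Dt k))ᵀ)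
              (γ^2 • (1 : Matrix (Fin l) (Fin l) ℝ)
                + (B k + Bt k)ᵀ * Q (k+1) * (B k + Bt k)
                + (D k + Dt k)ᵀ * P (k+1) * (D k + Dt k))) *ᵥ
            (Sum.elim (∫ b, x k b ∂μ) (∫ b, ν k b ∂μ)))
      - (∫ a, (x (K+1) a - ∫ b, x (K+1) b ∂μ) ⬝ᵥ (P (K+1)) *ᵥ
            (x (K+1) a - ∫ b, x (K+1) b ∂μ) ∂μ)
      - (∫ b, x (K+1) b ∂μ) ⬝ᵥ (Q (K+1)) *ᵥ (∫ b, x (K+1) b ∂μ)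
      + x0 ⬝ᵥ (Q 0) *ᵥ x0 :=
  mf_lemma23_general μ K n l m γ A At C Ct B Bt D Dt Φ W hW2 hWmean hWcov P Q hP hQ x0 ν x hx hadm
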